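/- Let H be an RKHS over ℝⁿ of C¹ functions, f : ℝⁿ → ℝⁿ, and γ : [0,T] → ℝⁿ a trajectory with γ̇(t) = f(γ(t)) for a.e. t. Then the occupation kernel Γ_γ lies in the domain of the adjoint A_f* of the Liouville operator, and A_f* Γ_γ = K(·, γ(T)) − K(·, γ(0)). -/

import Mathlib

/-! For `g` in the domain of `A_f`, the integrand `⟪A_f g, K(·, γ t)⟫ = ∇g(γ t) · γ̇(t)` of
`⟪A_f g, Γ_γ⟫` is the derivative of `g ∘ γ`, and it is continuous because `A_f g ∈ H` is `C¹`;
the fundamental theorem of calculus then gives `g(γ T) − g(γ 0)`. -/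

open RealInnerProductSpace Set MeasureTheory

section GradientAlongCurve

variable {E : Type*} [NormedAddCommGroup E] [InnerProductSpace ℝ E] [CompleteSpace E]

theorem HasGradientAt.comp_hasDerivAt {φ : E → ℝ} {φ' : E} {γ : ℝ → E} {γ' : E}
    {t : ℝ} (hφ : HasGradientAt φ φ' (γ t)) (hγ : HasDerivAt γ γ' t) :
    HasDerivAt (φ ∘ γ) ⟪φ', γ'⟫ t := by
  simpa using hφ.hasFDerivAt.comp_hasDerivAt t hγ

theorem integral_inner_gradient_comp_eq_sub {φ : E → ℝ} {φ' : E → E} {γ γ' : ℝ → E}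
    {a b : ℝ} (hφ : ∀ t ∈ uIcc a b, HasGradientAt φ (φ' (γ t)) (γ t))
    (hγ : ∀ t ∈ uIcc a b, HasDerivAt γ (γ' t) t)
    (hint : IntervalIntegrable (fun t => ⟪φ' (γ t), γ' t⟫) volume a b) :
    ∫ t in a..b, ⟪φ' (γ t), γ' t⟫ = φ (γ b) - φ (γ a) :=
  intervalIntegral.integral_eq_sub_of_hasDerivAt
    (fun t ht => (hφ t ht).comp_hasDerivAt (hγ t ht)) hint

end GradientAlongCurve

/-- The occupation kernel `Γγ` of a trajectory `γ` of `ẋ = f(x)` lies in the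
domain of the adjoint of the Liouville operator `A_f g = ∇g · f`, with
`A_f* Γγ = K(·, γ(T)) − K(·, γ(0))`.  The RKHS of C¹ functions on `ℝⁿ` is
modeled by kernel vectors `k` (so `g(x) = ⟪g, k x⟫`) together with the fact that
each `g ∈ H` has gradient `grad g`.  Membership of `Γγ` in `D(A_f*)` and the
adjoint formula are expressed as: for every `g` in the domain of `A_f`
(witnessed by `h = A_f g ∈ H`), `⟪A_f g, Γγ⟫ = ⟪g, k (γ T) − k (γ 0)⟫`. -/
theorem stmt_6 {n : ℕ} {H : Type*} [NormedAddCommGroup H] [InnerProductSpace ℝ H]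
    (k : EuclideanSpace ℝ (Fin n) → H)
    (grad : H → EuclideanSpace ℝ (Fin n) → EuclideanSpace ℝ (Fin n))
    (hgrad : ∀ (g : H), ∀ x, HasGradientAt (fun y => ⟪g, k y⟫) (grad g x) x)
    (f : EuclideanSpace ℝ (Fin n) → EuclideanSpace ℝ (Fin n))
    (γ : ℝ → EuclideanSpace ℝ (Fin n)) (T : ℝ) (hT : 0 ≤ T)
    (hγ : ∀ t ∈ Set.Icc (0:ℝ) T, HasDerivAt γ (f (γ t)) t)
    (Γγ : H) (hΓ : ∀ g : H, ⟪g, Γγ⟫ = ∫ t in (0:ℝ)..T, ⟪g, k (γ t)⟫) :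
    ∀ g h : H, (∀ x, ⟪h, k x⟫ = ⟪grad g x, f x⟫) →
      ⟪h, Γγ⟫ = ⟪g, k (γ T) - k (γ 0)⟫ := by
  intro g h hgh
  have hγ' : ∀ t ∈ uIcc 0 T, HasDerivAt γ (f (γ t)) t := by rwa [uIcc_of_le hT]
  have hcont : ContinuousOn (fun t => ⟪h, k (γ t)⟫) (uIcc 0 T) := fun t ht =>
    ((hgrad h (γ t)).differentiableAt.continuousAt.comp
      (hγ' t ht).continuousAt).continuousWithinAt
  simp only [hgh] at hcont
  rw [hΓ h, inner_sub_right]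
  simp only [hgh]
  exact integral_inner_gradient_comp_eq_sub (fun t _ => hgrad g (γ t)) hγ'
    hcont.intervalIntegrable
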